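/- Let A₀ and A₁ be symmetric positive definite d×d matrices with λ_min(A₀) ≤ λ_min(A₁), and let A₀^{1/2}, A₁^{1/2} denote their unique symmetric positive definite square roots. Then ∥A₁^{−1/2} − A₀^{−1/2}∥ ≤ ∥A₁ − A₀∥ / (2·λ_min(A₀)^{3/2}), where ∥·∥ is the matrix operator norm and λ_min the smallest eigenvalue. -/

import Mathlib

open MeasureTheory Real Set
open scoped Classical

noncomputable section

abbrev Euc (d : ℕ) := EuclideanSpace ℝ (Fin d)

/-- Symmetric PSD square root of a matrix (zero if not PSD). -/
def matSqrt {d : ℕ} (M : Matrix (Fin d) (Fin d) ℝ) : Matrix (Fin d) (Fin d) ℝ :=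
  if h : M.PosSemidef then
    h.1.eigenvectorUnitary.1 * Matrix.diagonal ((↑) ∘ (√·) ∘ h.1.eigenvalues) *
      (star h.1.eigenvectorUnitary : Matrix (Fin d) (Fin d) ℝ) else 0

/-- Operator norm of a matrix acting on Euclidean space. -/
def matOpNorm {d : ℕ} (M : Matrix (Fin d) (Fin d) ℝ) : ℝ :=
  ‖LinearMap.toContinuousLinearMap (Matrix.toEuclideanLin M)‖

/-- `H`-weighted norm `√(xᵀ H x)`. -/
def normH {d : ℕ} (H : Matrix (Fin d) (Fin d) ℝ) (x : Euc d) : ℝ :=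
  Real.sqrt (inner ℝ x (Matrix.toEuclideanLin H x) : ℝ)

/-- Standard Gaussian measure on `ℝ^d`. -/
def stdGaussian (d : ℕ) : Measure (Euc d) :=
  volume.withDensity fun x => ENNReal.ofReal ((2 * π) ^ (-(d : ℝ) / 2) * Real.exp (-‖x‖ ^ 2 / 2))

/-- Gaussian measure `N(m, S)`, defined as the pushforward of the standard Gaussian
by `z ↦ m + S^{1/2} z`. -/
def gaussN {d : ℕ} (m : Euc d) (S : Matrix (Fin d) (Fin d) ℝ) : Measure (Euc d) :=
  (stdGaussian d).map fun z => m + Matrix.toEuclideanLin (matSqrt S) z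

/-- Normalization of a measure to a probability measure. -/
def normalized {α : Type*} [MeasurableSpace α] (μ : Measure α) : Measure α :=
  (μ Set.univ)⁻¹ • μ

/-- Posterior measure `π ∝ e^{-n v}` on `ℝ^d`. -/
def post (d n : ℕ) (v : Euc d → ℝ) : Measure (Euc d) :=
  normalized (volume.withDensity fun x => ENNReal.ofReal (Real.exp (-(n : ℝ) * v x)))

/-- Hessian matrix of `f` at `x`. -/
def hess {d : ℕ} (f : Euc d → ℝ) (x : Euc d) : Matrix (Fin d) (Fin d) ℝ :=
  fun i j => iteratedFDeriv ℝ 2 f x ![EuclideanSpace.single i 1, EuclideanSpace.single j 1]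

/-- Assumption 1: `mstar` is the unique global minimizer of `v` and the Hessian there
is positive definite. -/
def Assumption1 {d : ℕ} (v : Euc d → ℝ) (mstar : Euc d) : Prop :=
  (∀ x, x ≠ mstar → v mstar < v x) ∧ (hess v mstar).PosDef

/-- Assumption 2: polynomial growth of the `H_v`-weighted third and fourth derivatives,
plus the smallness condition `a₃ d/√n + a₄ d²/n ≤ 1`. -/
def Assumption2 {d : ℕ} (n : ℕ) (v : Euc d → ℝ) (mstar : Euc d) (q a₃ a₄ : ℝ) : Prop :=
  (∀ k ∈ ({3, 4} : Set ℕ), ∀ x u : Euc d, normH (hess v mstar) u = 1 →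
    iteratedFDeriv ℝ k v x (fun _ => u) ≤ (if k = 3 then a₃ else a₄) *
      (max 1 (Real.sqrt ((n : ℝ) / d) * normH (hess v mstar) (x - mstar))) ^ q) ∧
  a₃ * d / Real.sqrt n + a₄ * d ^ 2 / n ≤ 1

/-- Assumption 3: linear growth of `v` away from the minimizer. -/
def Assumption3 {d : ℕ} (n : ℕ) (v : Euc d → ℝ) (mstar : Euc d) (c₀ : ℝ) : Prop :=
  ∀ x : Euc d, (1 / 2) * Real.sqrt ((d : ℝ) / n) ≤ normH (hess v mstar) (x - mstar) →
    c₀ * Real.sqrt ((d : ℝ) / n) * normH (hess v mstar) (x - mstar) ≤ v x - v mstar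

/-- Membership in the region `R_V`. -/
def inRV {d : ℕ} (n : ℕ) (v : Euc d → ℝ) (mstar : Euc d)
    (m : Euc d) (S : Matrix (Fin d) (Fin d) ℝ) : Prop :=
  S.PosDef ∧ ((2 : ℝ) • ((n : ℝ) • hess v mstar)⁻¹ - S).PosSemidef ∧
    matOpNorm (matSqrt ((n : ℝ) • hess v mstar) * matSqrt S) ^ 2
      + ‖Matrix.toEuclideanLin (matSqrt ((n : ℝ) • hess v mstar)) (m - mstar)‖ ^ 2 ≤ 8

/-- First-order optimality equations for Gaussian VI:
`E[∇V(m + S^{1/2}Z)] = 0` and `E[∇²V(m + S^{1/2}Z)] = S⁻¹`, with `V = n v`. -/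
def optEqs {d : ℕ} (n : ℕ) (v : Euc d → ℝ) (m : Euc d) (S : Matrix (Fin d) (Fin d) ℝ) : Prop :=
  (∫ z, gradient (fun x => (n : ℝ) * v x) (m + Matrix.toEuclideanLin (matSqrt S) z)
      ∂(stdGaussian d)) = 0 ∧
  ∀ i j, (∫ z, hess (fun x => (n : ℝ) * v x) (m + Matrix.toEuclideanLin (matSqrt S) z) i j
      ∂(stdGaussian d)) = S⁻¹ i j

/-- Condition (G) on the test function `g`. -/
def condG {d : ℕ} (c₀ Rg : ℝ) (mhat : Euc d) (Shat : Matrix (Fin d) (Fin d) ℝ)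
    (g : Euc d → ℝ) : Prop :=
  ∀ x : Euc d, Rg * Real.sqrt d ≤ normH Shat⁻¹ (x - mhat) →
    |g x - ∫ y, g y ∂(gaussN mhat Shat)| ≤
      Real.exp (c₀ * Real.sqrt d * normH Shat⁻¹ (x - mhat) / 4)

/-- Variance of `g` under `μ`. -/
def varG {d : ℕ} (μ : Measure (Euc d)) (g : Euc d → ℝ) : ℝ :=
  ∫ x, (g x - ∫ y, g y ∂μ) ^ 2 ∂μ

section AuxInvSqrt
variable {d : ℕ}


lemma toEuc_mul (M N : Matrix (Fin d) (Fin d) ℝ) (x : Euc d) :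
    Matrix.toEuclideanLin (M * N) x = Matrix.toEuclideanLin M (Matrix.toEuclideanLin N x) := by
  simp [Matrix.toEuclideanLin_apply, Matrix.mulVec_mulVec]

lemma eigen_apply {A : Matrix (Fin d) (Fin d) ℝ} (hA : A.IsHermitian) (j : Fin d) :
    Matrix.toEuclideanLin A (hA.eigenvectorBasis j) =
      hA.eigenvalues j • hA.eigenvectorBasis j := by
  ext i
  have := congrFun (hA.mulVec_eigenvectorBasis j) i
  simpa [Matrix.toEuclideanLin_apply] using this

lemma qf_expansion {A : Matrix (Fin d) (Fin d) ℝ} (hA : A.IsHermitian) (x : Euc d) :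
    (inner ℝ x (Matrix.toEuclideanLin A x) : ℝ) =
      ∑ j, hA.eigenvalues j * (inner ℝ (hA.eigenvectorBasis j) x : ℝ) ^ 2 := by
  rw [← (hA.eigenvectorBasis).sum_inner_mul_inner x (Matrix.toEuclideanLin A x)]
  congr 1; ext j
  have hsym := Matrix.isHermitian_iff_isSymmetric.1 hA
  have : (inner ℝ (hA.eigenvectorBasis j) (Matrix.toEuclideanLin A x) : ℝ)
      = hA.eigenvalues j * inner ℝ (hA.eigenvectorBasis j) x := by
    rw [← hsym (hA.eigenvectorBasis j) x, eigen_apply hA j, inner_smul_left]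
    simp
  rw [this, real_inner_comm x]
  ring

lemma normsq_expansion (b : OrthonormalBasis (Fin d) ℝ (Euc d)) (x : Euc d) :
    ‖x‖ ^ 2 = ∑ j, (inner ℝ (b j) x : ℝ) ^ 2 := by
  rw [← real_inner_self_eq_norm_sq, ← b.sum_inner_mul_inner x x]
  congr 1; ext j; rw [real_inner_comm x]; ring


lemma qf_le_opNorm (M : Matrix (Fin d) (Fin d) ℝ) (x : Euc d) :
    |(inner ℝ x (Matrix.toEuclideanLin M x) : ℝ)| ≤ matOpNorm M * ‖x‖ ^ 2 := by
  have h1 := abs_real_inner_le_norm x (Matrix.toEuclideanLin M x)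
  have h2 : ‖Matrix.toEuclideanLin M x‖ ≤ matOpNorm M * ‖x‖ :=
    (LinearMap.toContinuousLinearMap (Matrix.toEuclideanLin M)).le_opNorm x
  calc |(inner ℝ x (Matrix.toEuclideanLin M x) : ℝ)| ≤ ‖x‖ * ‖Matrix.toEuclideanLin M x‖ := h1
    _ ≤ ‖x‖ * (matOpNorm M * ‖x‖) := by
        exact mul_le_mul_of_nonneg_left h2 (norm_nonneg x)
    _ = matOpNorm M * ‖x‖ ^ 2 := by ring

lemma opNorm_le_of_qf {M : Matrix (Fin d) (Fin d) ℝ} (hA : M.IsHermitian) {t : ℝ} (ht : 0 ≤ t)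
    (h : ∀ x : Euc d, |(inner ℝ x (Matrix.toEuclideanLin M x) : ℝ)| ≤ t * ‖x‖ ^ 2) :
    matOpNorm M ≤ t := by
  have hsym := Matrix.isHermitian_iff_isSymmetric.1 hA
  apply ContinuousLinearMap.opNorm_le_bound _ ht
  intro x
  set T := Matrix.toEuclideanLin M with hT
  show ‖T x‖ ≤ t * ‖x‖
  by_cases hTx : T x = 0
  · rw [hTx]; simp; positivity
  set y : Euc d := (‖x‖ / ‖T x‖) • T x with hy
  have hyn : ‖y‖ = ‖x‖ := by
    rw [hy, norm_smul]
    rw [norm_div, norm_norm, norm_norm]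
    have h0 : ‖T x‖ ≠ 0 := norm_ne_zero_iff.2 hTx
    field_simp
  have hxy : (inner ℝ x (T y) : ℝ) = ‖x‖ * ‖T x‖ := by
    have h0 : ‖T x‖ ≠ 0 := norm_ne_zero_iff.2 hTx
    rw [← hsym x y, hy, inner_smul_right, real_inner_self_eq_norm_sq]
    field_simp
  have hkey : 4 * (‖x‖ * ‖T x‖) = (inner ℝ (x + y) (T (x + y)) : ℝ) - inner ℝ (x - y) (T (x - y)) := by
    have e1 : (inner ℝ y (T x) : ℝ) = inner ℝ x (T y) := by
      rw [← hsym y x, real_inner_comm]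
    simp only [map_add, map_sub, inner_add_left, inner_add_right, inner_sub_left,
      inner_sub_right]
    rw [e1, hxy]
    ring
  have hb : (inner ℝ (x + y) (T (x + y)) : ℝ) - inner ℝ (x - y) (T (x - y)) ≤
      t * ‖x + y‖ ^ 2 + t * ‖x - y‖ ^ 2 := by
    have h1 := (abs_le.1 (h (x + y))).2
    have h2 := (abs_le.1 (h (x - y))).1
    linarith
  have hpar : ‖x + y‖ ^ 2 + ‖x - y‖ ^ 2 = 2 * (‖x‖ ^ 2 + ‖y‖ ^ 2) := by
    have := parallelogram_law_with_norm ℝ x y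
    nlinarith [this]
  have : 4 * (‖x‖ * ‖T x‖) ≤ 4 * (t * ‖x‖ ^ 2) := by
    rw [hkey]
    calc _ ≤ t * ‖x + y‖ ^ 2 + t * ‖x - y‖ ^ 2 := hb
      _ = t * (‖x + y‖ ^ 2 + ‖x - y‖ ^ 2) := by ring
      _ = t * (2 * (‖x‖ ^ 2 + ‖y‖ ^ 2)) := by rw [hpar]
      _ = 4 * (t * ‖x‖ ^ 2) := by rw [hyn]; ring
  by_cases hx : x = 0
  · simp [hx]
  · have hxn : 0 < ‖x‖ := norm_pos_iff.2 hx
    have : ‖x‖ * ‖T x‖ ≤ t * ‖x‖ ^ 2 := by linarith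
    calc ‖T x‖ = (‖x‖ * ‖T x‖) / ‖x‖ := by field_simp
      _ ≤ (t * ‖x‖ ^ 2) / ‖x‖ := by gcongr
      _ = t * ‖x‖ := by field_simp

lemma opNorm_le_of_eigs {M : Matrix (Fin d) (Fin d) ℝ} (hA : M.IsHermitian) {t : ℝ} (ht : 0 ≤ t)
    (h : ∀ j, |hA.eigenvalues j| ≤ t) : matOpNorm M ≤ t := by
  apply opNorm_le_of_qf hA ht
  intro x
  rw [qf_expansion hA x]
  calc |∑ j, hA.eigenvalues j * (inner ℝ (hA.eigenvectorBasis j) x : ℝ) ^ 2|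
      ≤ ∑ j, |hA.eigenvalues j * (inner ℝ (hA.eigenvectorBasis j) x : ℝ) ^ 2| :=
        Finset.abs_sum_le_sum_abs _ _
    _ ≤ ∑ j, t * (inner ℝ (hA.eigenvectorBasis j) x : ℝ) ^ 2 := by
        apply Finset.sum_le_sum
        intro j _
        rw [abs_mul, abs_pow, sq_abs]
        exact mul_le_mul_of_nonneg_right (h j) (sq_nonneg _)
    _ = t * ‖x‖ ^ 2 := by rw [← Finset.mul_sum, ← normsq_expansion]

lemma qf_ge_of_eigs {M : Matrix (Fin d) (Fin d) ℝ} (hA : M.IsHermitian) {c : ℝ}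
    (h : ∀ j, c ≤ hA.eigenvalues j) (x : Euc d) :
    c * ‖x‖ ^ 2 ≤ (inner ℝ x (Matrix.toEuclideanLin M x) : ℝ) := by
  rw [qf_expansion hA x, normsq_expansion hA.eigenvectorBasis x, Finset.mul_sum]
  apply Finset.sum_le_sum
  intro j _
  exact mul_le_mul_of_nonneg_right (h j) (sq_nonneg _)

lemma matOpNorm_mul_le (M N : Matrix (Fin d) (Fin d) ℝ) :
    matOpNorm (M * N) ≤ matOpNorm M * matOpNorm N := by
  have : LinearMap.toContinuousLinearMap (Matrix.toEuclideanLin (M * N)) =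
      (LinearMap.toContinuousLinearMap (Matrix.toEuclideanLin M)).comp
        (LinearMap.toContinuousLinearMap (Matrix.toEuclideanLin N)) := by
    apply ContinuousLinearMap.ext
    intro x
    simp only [ContinuousLinearMap.comp_apply, LinearMap.coe_toContinuousLinearMap']
    exact toEuc_mul M N x
  rw [matOpNorm, this]
  exact ContinuousLinearMap.opNorm_comp_le _ _

lemma matOpNorm_neg (M : Matrix (Fin d) (Fin d) ℝ) : matOpNorm (-M) = matOpNorm M := by
  have : LinearMap.toContinuousLinearMap (Matrix.toEuclideanLin (-M)) =
      -(LinearMap.toContinuousLinearMap (Matrix.toEuclideanLin M)) := by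
    ext x
    simp [Matrix.toEuclideanLin_apply, Matrix.neg_mulVec]
  rw [matOpNorm, this, norm_neg, matOpNorm]

lemma matOpNorm_nonneg (M : Matrix (Fin d) (Fin d) ℝ) : 0 ≤ matOpNorm M := norm_nonneg _

lemma matSqrt_psd {d : ℕ} {M : Matrix (Fin d) (Fin d) ℝ} (h : M.PosSemidef) :
    (matSqrt M).PosSemidef := by
  rw [matSqrt, dif_pos h]
  have hD : (Matrix.diagonal ((↑) ∘ (√·) ∘ h.1.eigenvalues) :
      Matrix (Fin d) (Fin d) ℝ).PosSemidef := by
    rw [Matrix.posSemidef_diagonal_iff]; intro i; simp [Real.sqrt_nonneg]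
  have := hD.mul_mul_conjTranspose_same (h.1.eigenvectorUnitary : Matrix (Fin d) (Fin d) ℝ)
  simpa [Matrix.star_eq_conjTranspose] using this

lemma matSqrt_mul_self {d : ℕ} {M : Matrix (Fin d) (Fin d) ℝ} (h : M.PosSemidef) :
    matSqrt M * matSqrt M = M := by
  rw [matSqrt, dif_pos h]
  conv_rhs => rw [h.1.spectral_theorem]
  rw [Unitary.conjStarAlgAut_apply]
  have hU : (star h.1.eigenvectorUnitary : Matrix (Fin d) (Fin d) ℝ) *
      h.1.eigenvectorUnitary.1 = 1 := Unitary.coe_star_mul_self _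
  calc _ = h.1.eigenvectorUnitary.1 * (Matrix.diagonal ((↑) ∘ (√·) ∘ h.1.eigenvalues) *
        ((star h.1.eigenvectorUnitary : Matrix (Fin d) (Fin d) ℝ) * h.1.eigenvectorUnitary.1) *
        Matrix.diagonal ((↑) ∘ (√·) ∘ h.1.eigenvalues)) *
        (star h.1.eigenvectorUnitary : Matrix (Fin d) (Fin d) ℝ) := by
          simp only [Matrix.mul_assoc]
    _ = _ := by
      rw [hU, Matrix.mul_one, Matrix.diagonal_mul_diagonal]
      congr 3
      funext i
      simp [Real.mul_self_sqrt (h.eigenvalues_nonneg i)]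

lemma sqrt_qf_lower {A : Matrix (Fin d) (Fin d) ℝ} (hA : A.PosDef) {lam : ℝ}
    (hlam : ∀ j, lam ≤ hA.1.eigenvalues j) (hlam0 : 0 ≤ lam) :
    ∀ x : Euc d, Real.sqrt lam * ‖x‖ ^ 2 ≤
      (inner ℝ x (Matrix.toEuclideanLin (matSqrt A) x) : ℝ) := by
  have hpsd : A.PosSemidef := hA.posSemidef
  have hBpsd : (matSqrt A).PosSemidef := matSqrt_psd hpsd
  have hBh : (matSqrt A).IsHermitian := hBpsd.1
  have hBsq : matSqrt A * matSqrt A = A := matSqrt_mul_self hpsd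
  apply qf_ge_of_eigs hBh
  intro j
  set v := hBh.eigenvectorBasis j with hv
  set μ := hBh.eigenvalues j with hμ
  have hv1 : ‖v‖ = 1 := hBh.eigenvectorBasis.orthonormal.1 j
  have hμ0 : 0 ≤ μ := hBpsd.eigenvalues_nonneg j
  have hq : (inner ℝ v (Matrix.toEuclideanLin A v) : ℝ) = μ ^ 2 := by
    rw [← hBsq, toEuc_mul, eigen_apply hBh j, _root_.map_smul, inner_smul_right,
      eigen_apply hBh j, inner_smul_right, real_inner_self_eq_norm_sq, hv1]
    ring
  have hge : lam * ‖v‖ ^ 2 ≤ (inner ℝ v (Matrix.toEuclideanLin A v) : ℝ) :=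
    qf_ge_of_eigs hA.1 hlam v
  rw [hv1, hq] at hge
  calc Real.sqrt lam ≤ Real.sqrt (μ ^ 2) := Real.sqrt_le_sqrt (by linarith)
    _ = μ := Real.sqrt_sq hμ0


end AuxInvSqrt

set_option maxHeartbeats 1000000

/-- **Perturbation bound for inverse matrix square roots** (Lemma E.1):
if `λ_min(A₀) ≤ λ_min(A₁)`, then
`∥A₁^{-1/2} − A₀^{-1/2}∥ ≤ ∥A₁ − A₀∥ / (2 λ_min(A₀)^{3/2})`. -/
theorem inv_sqrt_perturbation
    (d : ℕ)
    (A₀ A₁ : Matrix (Fin d) (Fin d) ℝ)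
    (hA₀ : A₀.PosDef) (hA₁ : A₁.PosDef)
    (hmin : (⨅ i, hA₀.1.eigenvalues i) ≤ ⨅ i, hA₁.1.eigenvalues i) :
    matOpNorm ((matSqrt A₁)⁻¹ - (matSqrt A₀)⁻¹) ≤
      matOpNorm (A₁ - A₀) / (2 * (⨅ i, hA₀.1.eigenvalues i) ^ ((3 : ℝ) / 2)) := by
  rcases Nat.eq_zero_or_pos d with hd | hd
  · subst hd
    have hz : ∀ M : Matrix (Fin 0) (Fin 0) ℝ, matOpNorm M = 0 := by
      intro M
      rw [matOpNorm]
      have : LinearMap.toContinuousLinearMap (Matrix.toEuclideanLin M) = 0 :=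
        ContinuousLinearMap.ext fun x => Subsingleton.elim _ _
      rw [this, norm_zero]
    rw [hz, hz, zero_div]
  haveI : Nonempty (Fin d) := ⟨⟨0, hd⟩⟩
  set lam0 := ⨅ i, hA₀.1.eigenvalues i with hlam0def
  set lam1 := ⨅ i, hA₁.1.eigenvalues i with hlam1def
  have hlam0_le : ∀ j, lam0 ≤ hA₀.1.eigenvalues j := fun j =>
    ciInf_le (Set.Finite.bddBelow (Set.finite_range _)) j
  have hlam1_le : ∀ j, lam1 ≤ hA₁.1.eigenvalues j := fun j =>
    ciInf_le (Set.Finite.bddBelow (Set.finite_range _)) j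
  have hlam0_pos : 0 < lam0 := by
    obtain ⟨j0, hj0⟩ := Finite.exists_min hA₀.1.eigenvalues
    exact lt_of_lt_of_le (hA₀.eigenvalues_pos j0) (le_ciInf hj0)
  have hlam1_pos : 0 < lam1 := lt_of_lt_of_le hlam0_pos hmin
  clear_value lam0 lam1
  set B₀ := matSqrt A₀ with hB0def
  set B₁ := matSqrt A₁ with hB1def
  -- basic facts about the square roots
  have hB0psd : B₀.PosSemidef := by
    rw [hB0def]; exact matSqrt_psd hA₀.posSemidef
  have hB1psd : B₁.PosSemidef := by
    rw [hB1def]; exact matSqrt_psd hA₁.posSemidef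
  have hB0h : B₀.IsHermitian := hB0psd.1
  have hB1h : B₁.IsHermitian := hB1psd.1
  have hB0sq : B₀ * B₀ = A₀ := by
    rw [hB0def]; exact matSqrt_mul_self hA₀.posSemidef
  have hB1sq : B₁ * B₁ = A₁ := by
    rw [hB1def]; exact matSqrt_mul_self hA₁.posSemidef
  have qB0 := sqrt_qf_lower hA₀ hlam0_le hlam0_pos.le
  have qB1 := sqrt_qf_lower hA₁ hlam1_le hlam1_pos.le
  rw [← hB0def] at qB0
  rw [← hB1def] at qB1
  clear_value B₀ B₁
  clear hB0def hB1def
  set s0 := Real.sqrt lam0 with hs0def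
  set s1 := Real.sqrt lam1 with hs1def
  have hs0 : 0 < s0 := Real.sqrt_pos.2 hlam0_pos
  have hs1 : 0 < s1 := Real.sqrt_pos.2 hlam1_pos
  have hs01 : s0 ≤ s1 := Real.sqrt_le_sqrt hmin
  clear_value s0 s1
  -- invertibility
  have hdet0 : B₀.det ≠ 0 := by
    intro h
    have : A₀.det = 0 := by rw [← hB0sq, Matrix.det_mul, h, mul_zero]
    exact hA₀.det_pos.ne' this
  have hdet1 : B₁.det ≠ 0 := by
    intro h
    have : A₁.det = 0 := by rw [← hB1sq, Matrix.det_mul, h, mul_zero]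
    exact hA₁.det_pos.ne' this
  have hinv0 : B₀ * B₀⁻¹ = 1 := Matrix.mul_nonsing_inv _ (isUnit_iff_ne_zero.2 hdet0)
  have hinv0' : B₀⁻¹ * B₀ = 1 := Matrix.nonsing_inv_mul _ (isUnit_iff_ne_zero.2 hdet0)
  have hinv1 : B₁ * B₁⁻¹ = 1 := Matrix.mul_nonsing_inv _ (isUnit_iff_ne_zero.2 hdet1)
  have hinv1' : B₁⁻¹ * B₁ = 1 := Matrix.nonsing_inv_mul _ (isUnit_iff_ne_zero.2 hdet1)
  -- operator norm bounds on the inverses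
  have hinvnorm : ∀ (B : Matrix (Fin d) (Fin d) ℝ) (hBh : B.IsHermitian) (s : ℝ), 0 < s →
      (∀ x : Euc d, s * ‖x‖ ^ 2 ≤ (inner ℝ x (Matrix.toEuclideanLin B x) : ℝ)) →
      B * B⁻¹ = 1 → matOpNorm B⁻¹ ≤ 1 / s := by
    intro B hBh s hs hq hBinv
    have hBinvh : B⁻¹.IsHermitian := hBh.inv
    apply opNorm_le_of_eigs hBinvh (by positivity)
    intro j
    set v := hBinvh.eigenvectorBasis j with hv
    set ν := hBinvh.eigenvalues j with hν
    have hv1 : ‖v‖ = 1 := hBinvh.eigenvectorBasis.orthonormal.1 j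
    have happ : Matrix.toEuclideanLin B⁻¹ v = ν • v := eigen_apply hBinvh j
    have hcomp : Matrix.toEuclideanLin B (Matrix.toEuclideanLin B⁻¹ v) = v := by
      rw [← toEuc_mul, hBinv]
      simp [Matrix.toEuclideanLin_apply]
    rw [happ, _root_.map_smul] at hcomp
    have hqv : s ≤ (inner ℝ v (Matrix.toEuclideanLin B v) : ℝ) := by
      have := hq v; rw [hv1] at this; simpa using this
    have hqpos : 0 < (inner ℝ v (Matrix.toEuclideanLin B v) : ℝ) := lt_of_lt_of_le hs hqv
    have hone : ν * (inner ℝ v (Matrix.toEuclideanLin B v) : ℝ) = 1 := by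
      have h' : (inner ℝ v (ν • (Matrix.toEuclideanLin B) v) : ℝ) = (inner ℝ v v : ℝ) := by
        rw [hcomp]
      rw [inner_smul_right, real_inner_self_eq_norm_sq, hv1, one_pow] at h'
      exact h'
    have hνpos : 0 < ν := by
      rcases lt_trichotomy ν 0 with h | h | h
      · nlinarith
      · rw [h, zero_mul] at hone; norm_num at hone
      · exact h
    have hνval : ν = 1 / (inner ℝ v (Matrix.toEuclideanLin B v) : ℝ) :=
      eq_one_div_of_mul_eq_one_left hone
    rw [abs_of_pos hνpos, hνval]
    apply one_div_le_one_div_of_le hs hqv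
  have nB0 : matOpNorm B₀⁻¹ ≤ 1 / s0 := hinvnorm B₀ hB0h s0 hs0 qB0 hinv0
  have nB1 : matOpNorm B₁⁻¹ ≤ 1 / s1 := hinvnorm B₁ hB1h s1 hs1 qB1 hinv1
  -- bound on the difference of square roots
  set K := matOpNorm (A₁ - A₀) with hKdef
  have hK0 : 0 ≤ K := matOpNorm_nonneg _
  clear_value K
  set c := s0 + s1 with hcdef
  have hc : 0 < c := by positivity
  clear_value c
  have hDh : (B₁ - B₀).IsHermitian := hB1h.sub hB0h
  have nD : matOpNorm (B₁ - B₀) ≤ K / c := by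
    apply opNorm_le_of_eigs hDh (div_nonneg hK0 hc.le)
    intro j
    set v := hDh.eigenvectorBasis j with hv
    set μ := hDh.eigenvalues j with hμ
    have hv1 : ‖v‖ = 1 := hDh.eigenvectorBasis.orthonormal.1 j
    have happ : Matrix.toEuclideanLin (B₁ - B₀) v = μ • v := eigen_apply hDh j
    have hAeq : A₁ - A₀ = B₁ * (B₁ - B₀) + (B₁ - B₀) * B₀ := by
      rw [← hB0sq, ← hB1sq]
      noncomm_ring
    have hsymD := Matrix.isHermitian_iff_isSymmetric.1 hDh
    have key : (inner ℝ v (Matrix.toEuclideanLin (A₁ - A₀) v) : ℝ) =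
        μ * ((inner ℝ v (Matrix.toEuclideanLin B₁ v) : ℝ)
          + (inner ℝ v (Matrix.toEuclideanLin B₀ v) : ℝ)) := by
      rw [hAeq, map_add, LinearMap.add_apply, inner_add_right, toEuc_mul, toEuc_mul, happ, _root_.map_smul,
        inner_smul_right]
      have : (inner ℝ v (Matrix.toEuclideanLin (B₁ - B₀) (Matrix.toEuclideanLin B₀ v)) : ℝ)
          = μ * (inner ℝ v (Matrix.toEuclideanLin B₀ v) : ℝ) := by
        rw [← hsymD v, happ, inner_smul_left]
        simp
      rw [this]
      ring
    have hsum : c ≤ (inner ℝ v (Matrix.toEuclideanLin B₁ v) : ℝ)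
        + (inner ℝ v (Matrix.toEuclideanLin B₀ v) : ℝ) := by
      have h0 := qB0 v
      have h1 := qB1 v
      rw [hv1] at h0 h1
      simp only [one_pow, mul_one] at h0 h1
      rw [hcdef]
      linarith
    have hbound : |(inner ℝ v (Matrix.toEuclideanLin (A₁ - A₀) v) : ℝ)| ≤ K := by
      have h' := qf_le_opNorm (A₁ - A₀) v
      rw [hv1, one_pow, mul_one] at h'
      rw [hKdef]
      exact h'
    rw [key, abs_mul] at hbound
    have hsumpos : 0 < (inner ℝ v (Matrix.toEuclideanLin B₁ v) : ℝ)
        + (inner ℝ v (Matrix.toEuclideanLin B₀ v) : ℝ) := lt_of_lt_of_le hc hsum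
    rw [abs_of_pos hsumpos] at hbound
    rw [le_div_iff₀ hc]
    calc |μ| * c ≤ |μ| * ((inner ℝ v (Matrix.toEuclideanLin B₁ v) : ℝ)
          + (inner ℝ v (Matrix.toEuclideanLin B₀ v) : ℝ)) := by
          exact mul_le_mul_of_nonneg_left hsum (abs_nonneg _)
      _ ≤ K := hbound
  -- assemble
  have hE : B₁⁻¹ - B₀⁻¹ = B₁⁻¹ * (B₀ - B₁) * B₀⁻¹ := by
    rw [Matrix.mul_sub, Matrix.sub_mul, Matrix.mul_assoc, hinv0, Matrix.mul_one]
    rw [Matrix.mul_assoc, ← Matrix.mul_assoc B₁⁻¹ B₁ B₀⁻¹, hinv1', Matrix.one_mul]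
  have hchain : matOpNorm (B₁⁻¹ - B₀⁻¹) ≤ (1 / s1) * (K / c) * (1 / s0) := by
    rw [hE]
    calc matOpNorm (B₁⁻¹ * (B₀ - B₁) * B₀⁻¹)
        ≤ matOpNorm (B₁⁻¹ * (B₀ - B₁)) * matOpNorm B₀⁻¹ := matOpNorm_mul_le _ _
      _ ≤ (matOpNorm B₁⁻¹ * matOpNorm (B₀ - B₁)) * matOpNorm B₀⁻¹ := by
          exact mul_le_mul_of_nonneg_right (matOpNorm_mul_le _ _) (matOpNorm_nonneg _)
      _ ≤ (1 / s1) * (K / c) * (1 / s0) := by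
          have hBB : matOpNorm (B₀ - B₁) = matOpNorm (B₁ - B₀) := by
            rw [show B₀ - B₁ = -(B₁ - B₀) by abel, matOpNorm_neg]
          rw [hBB]
          apply mul_le_mul
          · apply mul_le_mul nB1 nD (matOpNorm_nonneg _) (by positivity)
          · exact nB0
          · exact matOpNorm_nonneg _
          · positivity
  refine le_trans hchain ?_
  have hrpow : lam0 ^ ((3 : ℝ) / 2) = lam0 * s0 := by
    rw [show (3 : ℝ) / 2 = 1 + 1 / 2 by norm_num, Real.rpow_add hlam0_pos, Real.rpow_one,
      hs0def, Real.sqrt_eq_rpow]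
  rw [hrpow]
  have hs0sq : s0 ^ 2 = lam0 := by rw [hs0def]; exact Real.sq_sqrt hlam0_pos.le
  have hlhs : (1 / s1) * (K / c) * (1 / s0) = K / (s1 * c * s0) := by
    rw [div_mul_div_comm, div_mul_div_comm, one_mul, mul_one]
  rw [hlhs]
  have hden : 0 < 2 * (lam0 * s0) := by nlinarith
  apply div_le_div_of_nonneg_left hK0 hden
  rw [hcdef]
  have e : 2 * (lam0 * s0) = (s0 * (s0 + s0)) * s0 := by rw [← hs0sq]; ring
  rw [e]
  apply mul_le_mul_of_nonneg_right _ hs0.le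
  exact mul_le_mul hs01 (add_le_add_right hs01 s0) (by linarith) hs1.le

end
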